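/- arXiv:1502.06136 — 10 statements merged into one kernel-verified Lean document; each statement's English description precedes it below -/
import Mathlib

section
/- There exists a real number d₀ such that for every real d ≥ d₀ and every real λ with 0 < λ ≤ d/(4 ln d), the function g(x) = 1/(1 + λ(1 + λx²)^{−d}) maps the interval [1/(1+λ), 1] into itself, has a unique fixed point a* in [1/(1+λ), 1], and for every starting point x₀ ∈ [1/(1+λ), 1] the sequence of iterates defined by a₀ = x₀, aₙ = g(aₙ₋₁) converges to a*. -/
/-!
On `I = [1/(1+λ), 1]` the derivative `g' x = 2 x λ² d g(x)² (1 + λx²)^(-d-1)` is at most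
`2 d λ² (1 + t)^(-d)` with `t = λ/(1+λ)²`, so `g` is a `1/2`-contraction of `I` as soon as
`4 d λ² ≤ (1 + t)^d`, and Banach's fixed point theorem applies. Since
`(1 + t)^d ≥ exp (d t/(1+t))` and `t/(1+t) = λ/(λ² + 3λ + 1)`, it suffices that
`log (4 d λ²) ≤ d λ/(λ² + 3λ + 1)` whenever `4 d λ² > 1`. For `λ ≥ 10` the bound
`λ ≤ d/(4 log d)` makes the right side at least `3 log d ≥ log (4 d λ²)`; for `λ ≤ 10` the
right side is of order `d λ ≥ √d / 2`, which beats `2 log d` once `d` is large.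
-/

open Real Filter Set Topology
open scoped NNReal

theorem exists_fixedPoint_tendsto_iterate_of_lipschitzOnWith {α : Type*} [MetricSpace α]
    {f : α → α} {s : Set α} {K : ℝ≥0} (hK : K < 1) (hsc : IsComplete s) (hne : s.Nonempty)
    (hsf : MapsTo f s s) (hf : LipschitzOnWith K f s) :
    ∃ a ∈ s, f a = a ∧ (∀ b ∈ s, f b = b → b = a) ∧
      ∀ x ∈ s, Tendsto (fun n ↦ f^[n] x) atTop (𝓝 a) := by
  have hcontr : ContractingWith K (hsf.restrict f s s) := ⟨hK, fun x y ↦ hf x.2 y.2⟩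
  have hunique : ∀ a ∈ s, f a = a → ∀ b ∈ s, f b = b → b = a :=
    fun a ha hfa b hb hfb ↦ congrArg Subtype.val <|
      hcontr.fixedPoint_unique' (x := ⟨b, hb⟩) (y := ⟨a, ha⟩)
        (Subtype.ext hfb) (Subtype.ext hfa)
  obtain ⟨x₀, hx₀⟩ := hne
  obtain ⟨a, ha, hfa, -⟩ := hcontr.exists_fixedPoint' hsc hsf hx₀ (edist_ne_top _ _)
  refine ⟨a, ha, hfa, hunique a ha hfa, fun x hx ↦ ?_⟩
  obtain ⟨b, hb, hfb, hlim, -⟩ := hcontr.exists_fixedPoint' hsc hsf hx (edist_ne_top _ _)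
  rwa [hunique a ha hfa b hb hfb] at hlim

theorem exp_mul_div_one_add_le_rpow {t : ℝ} (ht : 0 ≤ t) {d : ℝ} (hd : 0 ≤ d) :
    exp (d * (t / (1 + t))) ≤ (1 + t) ^ d := by
  have ht1 : 0 < 1 + t := by linarith
  have hlog : t / (1 + t) ≤ log (1 + t) :=
    calc t / (1 + t) = 1 - (1 + t)⁻¹ := by field_simp; ring
      _ ≤ log (1 + t) := one_sub_inv_le_log_of_pos ht1
  rw [rpow_def_of_pos ht1, mul_comm (log _)]
  exact exp_le_exp.2 (mul_le_mul_of_nonneg_left hlog hd)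

section LogBounds

variable {d l : ℝ}

theorem log_four_mul_sq_le_of_ten_le (hlog : 1 ≤ log d) (hl : 10 ≤ l)
    (hld : l ≤ d / (4 * log d)) : log (4 * d * l ^ 2) ≤ d * (l / (l ^ 2 + 3 * l + 1)) := by
  have hld' : 4 * l * log d ≤ d := by
    rwa [le_div_iff₀ (by positivity), ← mul_assoc, mul_comm l] at hld
  have hd : 0 < d := by nlinarith
  have h2l : 2 * l ≤ d := by nlinarith
  calc log (4 * d * l ^ 2) ≤ log (d ^ 3) :=
        log_le_log (by positivity) (by nlinarith [mul_le_mul h2l h2l (by positivity) hd.le])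
    _ = 3 * log d := by rw [log_pow]; norm_num
    _ ≤ d * (l / (l ^ 2 + 3 * l + 1)) := by
      rw [mul_div_assoc', le_div_iff₀ (by positivity)]
      nlinarith [mul_nonneg (by linarith : 0 ≤ log d) (by nlinarith : 0 ≤ l ^ 2 - 9 * l - 3)]

theorem log_four_mul_sq_le_of_le_ten (hd : 400 ≤ d) (hlog : 1 ≤ log d)
    (hlog_sq : 64 * log d ^ 2 ≤ d) (hl : 0 < l) (hl10 : l ≤ 10) (hdl : 1 < 4 * d * l ^ 2) :
    log (4 * d * l ^ 2) ≤ d * (l / (l ^ 2 + 3 * l + 1)) := by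
  have hl_sq : l ^ 2 ≤ 100 := by nlinarith
  have hdl' : 4 * log d ≤ d * l :=
    le_of_pow_le_pow_left₀ two_ne_zero (by positivity) (by nlinarith)
  calc log (4 * d * l ^ 2) ≤ log (d ^ 2) := log_le_log (by positivity)
        (by nlinarith [mul_le_mul_of_nonneg_left hl_sq (by positivity : (0 : ℝ) ≤ d)])
    _ = 2 * log d := by rw [log_pow]; norm_num
    _ ≤ d * (l / (l ^ 2 + 3 * l + 1)) := by
      rw [mul_div_assoc', le_div_iff₀ (by positivity)]
      nlinarith

end LogBounds

theorem eventually_four_mul_sq_le_rpow :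
    ∀ᶠ d : ℝ in atTop, ∀ l : ℝ, 0 < l → l ≤ d / (4 * log d) →
      4 * d * l ^ 2 ≤ (1 + l / (1 + l) ^ 2) ^ d := by
  have hlog_sq : ∀ᶠ d : ℝ in atTop, 64 * log d ^ 2 ≤ d := by
    filter_upwards [isLittleO_pow_log_id_atTop.bound (c := 1 / 64) (by norm_num),
      eventually_ge_atTop 0] with d h hd
    rw [norm_pow, Real.norm_eq_abs, sq_abs, id, Real.norm_of_nonneg hd] at h
    linarith
  filter_upwards [eventually_ge_atTop 400, tendsto_log_atTop.eventually_ge_atTop 1, hlog_sq]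
    with d hd hlog hlog_sq l hl hld
  rcases le_or_gt (4 * d * l ^ 2) 1 with hsmall | hlarge
  · exact hsmall.trans (one_le_rpow (le_add_of_nonneg_right (by positivity)) (by linarith))
  have hexponent : log (4 * d * l ^ 2) ≤ d * (l / (l ^ 2 + 3 * l + 1)) :=
    (le_or_gt l 10).elim (log_four_mul_sq_le_of_le_ten hd hlog hlog_sq hl · hlarge)
      fun h ↦ log_four_mul_sq_le_of_ten_le hlog h.le hld
  have ht : l / (1 + l) ^ 2 / (1 + l / (1 + l) ^ 2) = l / (l ^ 2 + 3 * l + 1) := by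
    field_simp
    ring
  calc 4 * d * l ^ 2 = exp (log (4 * d * l ^ 2)) := (exp_log (by positivity)).symm
    _ ≤ exp (d * (l / (1 + l) ^ 2 / (1 + l / (1 + l) ^ 2))) := by
      rw [ht]
      exact exp_le_exp.2 hexponent
    _ ≤ (1 + l / (1 + l) ^ 2) ^ d := exp_mul_div_one_add_le_rpow (by positivity) (by linarith)

noncomputable def twoLevelMap (d l x : ℝ) : ℝ := 1 / (1 + l * (1 + l * x ^ 2) ^ (-d))

section TwoLevelMap

variable {d l : ℝ}

theorem twoLevelMap_mem_Icc (hd : 0 ≤ d) (hl : 0 ≤ l) (x : ℝ) :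
    twoLevelMap d l x ∈ Icc (1 / (1 + l)) 1 := by
  have hbase : 1 ≤ 1 + l * x ^ 2 := le_add_of_nonneg_right (by positivity)
  have hr : (1 + l * x ^ 2) ^ (-d) ≤ 1 := rpow_le_one_of_one_le_of_nonpos hbase (by linarith)
  have hden : 1 ≤ 1 + l * (1 + l * x ^ 2) ^ (-d) := le_add_of_nonneg_right (by positivity)
  exact ⟨one_div_le_one_div_of_le (by positivity) (by nlinarith),
    (div_le_one (by positivity)).2 hden⟩

theorem hasDerivAt_twoLevelMap (hl : 0 ≤ l) (x : ℝ) :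
    HasDerivAt (twoLevelMap d l)
      (2 * x * l ^ 2 * d * twoLevelMap d l x ^ 2 * (1 + l * x ^ 2) ^ (-d - 1)) x := by
  have hbase : 0 < 1 + l * x ^ 2 := by positivity
  have hden : 0 < 1 + l * (1 + l * x ^ 2) ^ (-d) := by positivity
  have hinner : HasDerivAt (fun x ↦ 1 + l * x ^ 2) (l * (2 * x)) x := by
    simpa using ((hasDerivAt_pow 2 x).const_mul l).const_add 1
  have hden' := ((hinner.rpow_const (p := -d) (Or.inl hbase.ne')).const_mul l).const_add 1
  have hfun : twoLevelMap d l = fun x ↦ (1 + l * (1 + l * x ^ 2) ^ (-d))⁻¹ :=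
    funext fun _ ↦ one_div _
  rw [hfun]
  refine (hden'.inv hden.ne').congr_deriv ?_
  field_simp

theorem lipschitzOnWith_twoLevelMap (hd : 0 ≤ d) (hl : 0 < l)
    (hkey : 4 * d * l ^ 2 ≤ (1 + l / (1 + l) ^ 2) ^ d) :
    LipschitzOnWith (1 / 2) (twoLevelMap d l) (Icc (1 / (1 + l)) 1) := by
  refine (convex_Icc _ _).lipschitzOnWith_of_nnnorm_hasDerivWithin_le
    (fun x _ ↦ (hasDerivAt_twoLevelMap hl.le x).hasDerivWithinAt) fun x ⟨hcx, hx1⟩ ↦ ?_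
  have hx0 : 0 < x := lt_of_lt_of_le (by positivity) hcx
  have hg := twoLevelMap_mem_Icc hd hl.le x
  have hg_sq : twoLevelMap d l x ^ 2 ≤ 1 := pow_le_one₀ (hg.1.trans' (by positivity)) hg.2
  have hbase : l / (1 + l) ^ 2 ≤ l * x ^ 2 :=
    calc l / (1 + l) ^ 2 = l * (1 / (1 + l)) ^ 2 := by field_simp
      _ ≤ l * x ^ 2 := by gcongr
  have hpow : (1 + l * x ^ 2) ^ (-d - 1) ≤ (1 + l / (1 + l) ^ 2) ^ (-d) :=
    (rpow_le_rpow_of_exponent_le (le_add_of_nonneg_right (by positivity)) (by linarith)).trans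
      (rpow_le_rpow_of_nonpos (by positivity) (by linarith) (by linarith))
  have hkey' : 2 * d * l ^ 2 * (1 + l / (1 + l) ^ 2) ^ (-d) ≤ 1 / 2 := by
    rw [rpow_neg (by positivity), ← div_eq_mul_inv, div_le_iff₀ (by positivity)]
    linarith
  rw [← NNReal.coe_le_coe, coe_nnnorm, Real.norm_of_nonneg (by positivity)]
  calc 2 * x * l ^ 2 * d * twoLevelMap d l x ^ 2 * (1 + l * x ^ 2) ^ (-d - 1)
      ≤ 2 * 1 * l ^ 2 * d * 1 * (1 + l / (1 + l) ^ 2) ^ (-d) := by gcongr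
    _ ≤ 1 / 2 := by linarith

end TwoLevelMap

/-- There is a `d₀` such that for all `d ≥ d₀` and `0 < λ ≤ d / (4 ln d)`, the
function `g x = 1 / (1 + λ (1 + λ x²)^(−d))` maps `[1/(1+λ), 1]` into itself,
has a unique fixed point `a*` there, and iterates from any starting point in
the interval converge to `a*`. -/
theorem stmt3 :
    ∃ d₀ : ℝ, ∀ d : ℝ, d₀ ≤ d → ∀ l : ℝ, 0 < l → l ≤ d / (4 * Real.log d) →
      ∀ g : ℝ → ℝ, (∀ x, g x = 1 / (1 + l * (1 + l * x ^ 2) ^ (-d))) →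
        Set.MapsTo g (Set.Icc (1 / (1 + l)) 1) (Set.Icc (1 / (1 + l)) 1) ∧
        ∃ astar ∈ Set.Icc (1 / (1 + l)) (1 : ℝ),
          g astar = astar ∧
          (∀ a ∈ Set.Icc (1 / (1 + l)) (1 : ℝ), g a = a → a = astar) ∧
          ∀ x₀ ∈ Set.Icc (1 / (1 + l)) (1 : ℝ),
            Filter.Tendsto (fun n : ℕ => g^[n] x₀) Filter.atTop (nhds astar) := by
  obtain ⟨d₀, hd₀⟩ :=
    eventually_atTop.1 ((eventually_ge_atTop 0).and eventually_four_mul_sq_le_rpow)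
  refine ⟨d₀, fun d hd l hl hld g hg ↦ ?_⟩
  obtain rfl : g = twoLevelMap d l := funext hg
  obtain ⟨hd0, hkey⟩ := hd₀ d hd
  have hmaps : MapsTo (twoLevelMap d l) (Icc (1 / (1 + l)) 1) (Icc (1 / (1 + l)) 1) :=
    fun x _ ↦ twoLevelMap_mem_Icc hd0 hl.le x
  have hne : (Icc (1 / (1 + l)) (1 : ℝ)).Nonempty :=
    ⟨1, (div_le_one (by positivity)).2 (by linarith), le_rfl⟩
  exact ⟨hmaps, exists_fixedPoint_tendsto_iterate_of_lipschitzOnWith (by norm_num)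
    isClosed_Icc.isComplete hne hmaps (lipschitzOnWith_twoLevelMap hd0 hl (hkey l hl hld))⟩
end

section
/- For every real number d with 0 < d ≤ e, the second iterate F(x) = exp(−d·exp(−d·x)) has exactly one fixed point in the interval [0, 1], namely the unique fixed point of the map x ↦ exp(−d·x). -/
/-!
A fixed point of `F = g ∘ g`, `g x = exp (-d x)`, is either a fixed point of `g`, which is unique
because `g` is decreasing, or lies on a 2-cycle `a < b` of `g`. For a 2-cycle, `u = d a` and
`v = d b` satisfy `u - log u = v - log v` and `log d = u + log v`. As `t ↦ t - log t` decreases on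
`(0, 1]` and increases on `[1, ∞)`, this forces `u < 1 < v`, and the inequality
`exp t + log (1 - t) < 1` on `(0, 1)`, at `t = 1 - u`, gives `u + log v > 1`, i.e. `d > e`.
-/

open Real Set Function

theorem Antitone.eq_of_isFixedPt {α : Type*} [LinearOrder α] {g : α → α} (hg : Antitone g)
    {x y : α} (hx : IsFixedPt g x) (hy : IsFixedPt g y) : x = y := by
  rcases le_total x y with h | h
  · exact le_antisymm h (hy ▸ hx ▸ hg h)
  · exact le_antisymm (hx ▸ hy ▸ hg h) h

namespace Real

theorem strictMonoOn_sub_log : StrictMonoOn (fun t : ℝ => t - log t) (Ici 1) := by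
  intro s (hs : 1 ≤ s) t _ hst
  have hs0 : 0 < s := by linarith
  have hlog : log t - log s < (t - s) / s := by
    rw [← log_div (by linarith) hs0.ne', sub_div, div_self hs0.ne']
    exact log_lt_sub_one_of_pos (div_pos (by linarith) hs0)
      (by rw [Ne, div_eq_one_iff_eq hs0.ne']; linarith)
  have : (t - s) / s ≤ t - s := div_le_self (by linarith) hs
  dsimp only
  linarith

theorem strictAntiOn_sub_log : StrictAntiOn (fun t : ℝ => t - log t) (Ioc 0 1) := by
  intro s ⟨hs0, _⟩ t ⟨ht0, ht1⟩ hst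
  have hlog : log s - log t < (s - t) / t := by
    rw [← log_div hs0.ne' ht0.ne', sub_div, div_self ht0.ne']
    exact log_lt_sub_one_of_pos (by positivity) (by rw [Ne, div_eq_one_iff_eq ht0.ne']; linarith)
  have : (s - t) / t ≤ s - t := by
    rw [div_le_iff₀ ht0]
    nlinarith
  dsimp only
  linarith

theorem exp_add_log_one_sub_lt_one {t : ℝ} (ht0 : 0 < t) (ht1 : t < 1) :
    exp t + log (1 - t) < 1 := by
  have hderiv : ∀ s ∈ Ioo (0 : ℝ) 1,
      HasDerivAt (fun s => exp s + log (1 - s)) (exp s - 1 / (1 - s)) s := by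
    intro s ⟨_, hs1⟩
    exact ((hasDerivAt_exp s).add
      (((hasDerivAt_id' s).const_sub 1).log (sub_ne_zero.mpr hs1.ne'))).congr_deriv (by ring)
  have hanti : StrictAntiOn (fun s => exp s + log (1 - s)) (Ico 0 1) := by
    refine strictAntiOn_of_deriv_neg (convex_Ico 0 1) ?_ ?_
    · refine continuous_exp.continuousOn.add (ContinuousOn.log (by fun_prop) ?_)
      intro s ⟨_, hs1⟩
      linarith
    · rw [interior_Ico]
      intro s hs
      rw [(hderiv s hs).deriv, sub_neg, lt_div_iff₀ (by linarith [hs.2])]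
      have := mul_lt_mul_of_pos_left (add_one_lt_exp (neg_ne_zero.mpr hs.1.ne')) (exp_pos s)
      rwa [← exp_add, add_neg_cancel, exp_zero, neg_add_eq_sub] at this
  simpa using hanti ⟨le_rfl, one_pos⟩ ⟨ht0.le, ht1⟩ ht0

variable {u v : ℝ}

theorem lt_one_and_one_lt_of_sub_log_eq (hu : 0 < u) (huv : u < v)
    (h : u - log u = v - log v) : u < 1 ∧ 1 < v := by
  constructor
  · by_contra! hu1
    exact huv.ne (strictMonoOn_sub_log.injOn hu1 (hu1.trans huv.le) h)
  · by_contra! hv1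
    exact huv.ne (strictAntiOn_sub_log.injOn ⟨hu, huv.le.trans hv1⟩ ⟨hu.trans huv, hv1⟩ h)

theorem one_lt_add_log_of_sub_log_eq (hu : 0 < u) (huv : u < v)
    (h : u - log u = v - log v) : 1 < u + log v := by
  obtain ⟨hu1, hv1⟩ := lt_one_and_one_lt_of_sub_log_eq hu huv h
  have hexp : exp (1 - u) + log u < 1 := by
    simpa using exp_add_log_one_sub_lt_one (t := 1 - u) (by linarith) (by linarith)
  have : exp (1 - u) < v := by
    refine (strictMonoOn_sub_log.lt_iff_lt (one_le_exp (by linarith)) hv1.le).mp ?_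
    rw [log_exp]
    linarith
  linarith [(lt_log_iff_exp_lt (hu.trans huv)).mpr this]

end Real

theorem eq_of_exp_neg_mul_two_cycle {d a b : ℝ} (hd : 0 < d) (hde : d ≤ exp 1)
    (hab : exp (-d * a) = b) (hba : exp (-d * b) = a) : a = b := by
  wlog h : a < b generalizing a b
  · rcases (not_lt.mp h).lt_or_eq with h | h
    · exact (this hba hab h).symm
    · exact h.symm
  have ha : 0 < a := hba ▸ exp_pos _
  have hb : 0 < b := hab ▸ exp_pos _
  have hloga : log a = -d * b := by rw [← hba, log_exp]
  have hlogb : log b = -d * a := by rw [← hab, log_exp]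
  have hlog_u : log (d * a) = log d - d * b := by rw [log_mul hd.ne' ha.ne', hloga]; ring
  have hlog_v : log (d * b) = log d - d * a := by rw [log_mul hd.ne' hb.ne', hlogb]; ring
  have key := one_lt_add_log_of_sub_log_eq (mul_pos hd ha) (mul_lt_mul_of_pos_left h hd)
    (by rw [hlog_u, hlog_v]; ring)
  have : log d ≤ 1 := by simpa using log_le_log hd hde
  linarith

/-- For `0 < d ≤ e`, the second iterate `F x = exp (−d exp (−d x))` has exactly
one fixed point in `[0, 1]`, namely the unique fixed point of `x ↦ exp (−d x)`. -/
theorem stmt5 (d : ℝ) (hd : 0 < d) (hde : d ≤ Real.exp 1) :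
    ∀ x : ℝ, Real.exp (-d * x) = x →
      x ∈ Set.Icc (0 : ℝ) 1 ∧
      Real.exp (-d * Real.exp (-d * x)) = x ∧
      ∀ y ∈ Set.Icc (0 : ℝ) 1, Real.exp (-d * Real.exp (-d * y)) = y → y = x := by
  intro x hx
  have hx0 : 0 < x := hx ▸ exp_pos _
  have hg : Antitone fun y => exp (-d * y) :=
    fun a b hab => exp_le_exp.mpr (by nlinarith)
  refine ⟨⟨hx0.le, hx ▸ exp_le_one_iff.mpr (by nlinarith)⟩, by rw [hx, hx], ?_⟩
  intro y _ hy
  have hfix : exp (-d * y) = y := (eq_of_exp_neg_mul_two_cycle hd hde rfl hy).symm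
  exact hg.eq_of_isFixedPt hfix hx
end

section
/- For every real number d > e, the map F(x) = exp(−d·exp(−d·x)) has a fixed point in [0, 1] that is strictly smaller than the unique fixed point of the map x ↦ exp(−d·x). -/
/-!
Let `x` be the fixed point of `y ↦ exp (-d y)` and `g y = exp (-d exp (-d y)) - y`. Then
`g x = 0` and `g' x = (d x)² - 1`, which is positive because `d > e` forces `d x > 1`; hence `g`
is negative just to the left of `x`. Since `g 0 = exp (-d) > 0`, the intermediate value theorem
gives a zero of `g`, i.e. a fixed point of `F`, in `(0, x)`.
-/

open Real Set Filter Topology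

theorem exists_mem_Ioo_eq_zero_of_deriv_pos {f : ℝ → ℝ} {a b : ℝ} (hab : a < b)
    (hf : ContinuousOn f (Icc a b)) (ha : 0 < f a) (hb : f b = 0) (hf' : 0 < deriv f b) :
    ∃ c ∈ Ioo a b, f c = 0 := by
  have hsign : ∀ᶠ x in 𝓝[<] b, SignType.sign (f x) = SignType.sign (x - b) :=
    nhdsWithin_le_nhds (eventually_nhdsWithin_sign_eq_of_deriv_pos hf' hb)
  obtain ⟨y, hfy, hy⟩ := (hsign.and (Ioo_mem_nhdsLT hab)).exists
  have hfy_neg : f y < 0 := by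
    rwa [sign_neg (sub_neg.mpr hy.2), sign_eq_neg_one_iff] at hfy
  obtain ⟨c, hc, hfc⟩ := intermediate_value_Icc' hy.1.le (hf.mono (Icc_subset_Icc_right hy.2.le))
    ⟨hfy_neg.le, ha.le⟩
  have hac : a ≠ c := by rintro rfl; exact ha.ne' hfc
  exact ⟨c, ⟨lt_of_le_of_ne hc.1 hac, hc.2.trans_lt hy.2⟩, hfc⟩

theorem hasDerivAt_exp_neg_mul_exp_neg_mul (d y : ℝ) :
    HasDerivAt (fun y => exp (-d * exp (-d * y)))
      (d ^ 2 * exp (-d * y) * exp (-d * exp (-d * y))) y := by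
  have hinner : HasDerivAt (fun y => exp (-d * y)) (exp (-d * y) * -d) y := by
    simpa using ((hasDerivAt_id y).const_mul (-d)).exp
  convert (hinner.const_mul (-d)).exp using 1
  ring

theorem one_lt_mul_of_exp_neg_mul_eq {d x : ℝ} (hd : exp 1 < d) (hx : exp (-d * x) = x) :
    1 < d * x := by
  by_contra! h
  have hx_ge : exp (-1) ≤ x := hx ▸ exp_le_exp.mpr (by linarith)
  have hexp : exp 1 * exp (-1) = 1 := by rw [← exp_add]; simp
  have hd0 : 0 ≤ d := (exp_pos 1).le.trans hd.le
  nlinarith [mul_le_mul_of_nonneg_left hx_ge hd0, mul_lt_mul_of_pos_right hd (exp_pos (-1))]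

/-- For `d > e`, the map `F x = exp (−d exp (−d x))` has a fixed point in
`[0, 1]` strictly smaller than the unique fixed point of `x ↦ exp (−d x)`. -/
theorem stmt6 (d : ℝ) (hd : Real.exp 1 < d) :
    ∀ x : ℝ, Real.exp (-d * x) = x →
      ∃ y ∈ Set.Icc (0 : ℝ) 1, Real.exp (-d * Real.exp (-d * y)) = y ∧ y < x := by
  intro x hx
  have hdx := one_lt_mul_of_exp_neg_mul_eq hd hx
  have hx0 : 0 < x := hx ▸ exp_pos _
  have hx1 : x < 1 := hx ▸ exp_lt_one_iff.mpr (by linarith)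
  have hderiv : HasDerivAt (fun y => exp (-d * exp (-d * y)) - y) ((d * x) ^ 2 - 1) x := by
    refine ((hasDerivAt_exp_neg_mul_exp_neg_mul d x).sub (hasDerivAt_id x)).congr_deriv ?_
    rw [hx, hx]
    ring
  obtain ⟨y, hy, hFy⟩ := exists_mem_Ioo_eq_zero_of_deriv_pos
    (f := fun y => exp (-d * exp (-d * y)) - y) hx0 (by fun_prop)
    (by simpa using exp_pos (-d)) (by simp only [hx, sub_self]) (by rw [hderiv.deriv]; nlinarith)
  exact ⟨y, ⟨hy.1.le, by linarith [hy.2]⟩, sub_eq_zero.mp hFy, hy.2⟩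
end

section
/- Let d > 0 be real and let x_d denote the unique fixed point in (0,1) of the map x ↦ exp(−d·x). Then 2·d²·x_d² < 1 if and only if d < e^{1/√2}/√2. -/
/-- For `d > 0`, if `x_d` is the unique fixed point in `(0,1)` of
`x ↦ exp (−d x)`, then `2 d² x_d² < 1 ↔ d < e^{1/√2} / √2`. -/
theorem stmt7 (d : ℝ) (hd : 0 < d) (x : ℝ) (hx : x ∈ Set.Ioo (0 : ℝ) 1)
    (hfix : Real.exp (-d * x) = x) :
    2 * d ^ 2 * x ^ 2 < 1 ↔ d < Real.exp (1 / Real.sqrt 2) / Real.sqrt 2 := by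
  obtain ⟨hx0, hx1⟩ := hx
  set t := d * x with htdef
  have ht : 0 < t := mul_pos hd hx0
  have hxt : x = Real.exp (-t) := by rw [← hfix, htdef, neg_mul]
  have h1 : x * Real.exp t = 1 := by
    rw [hxt, ← Real.exp_add]; simp
  have hdt : d = t * Real.exp t :=
    calc d = d * (x * Real.exp t) := by rw [h1]; ring
    _ = t * Real.exp t := by rw [htdef]; ring
  have hs2 : (0:ℝ) < Real.sqrt 2 := Real.sqrt_pos.mpr (by norm_num)
  have hsq : Real.sqrt 2 ^ 2 = 2 := Real.sq_sqrt (by norm_num)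
  have hs : (0:ℝ) < 1 / Real.sqrt 2 := by positivity
  have hrw : 2 * d ^ 2 * x ^ 2 = 2 * t ^ 2 := by rw [htdef]; ring
  have hdstar : Real.exp (1 / Real.sqrt 2) / Real.sqrt 2
      = (1 / Real.sqrt 2) * Real.exp (1 / Real.sqrt 2) := by ring
  rw [hrw, hdstar]
  constructor
  · intro h
    have ht2 : t < 1 / Real.sqrt 2 := by
      rw [lt_div_iff₀ hs2]
      nlinarith
    rw [hdt]
    exact mul_lt_mul'' ht2 (Real.exp_lt_exp.mpr ht2) ht.le (Real.exp_pos t).le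
  · intro h
    by_contra h2
    push_neg at h2
    have ht2 : 1 / Real.sqrt 2 ≤ t := by
      rw [div_le_iff₀ hs2]
      nlinarith
    have : (1 / Real.sqrt 2) * Real.exp (1 / Real.sqrt 2) ≤ t * Real.exp t := by
      apply mul_le_mul ht2 (Real.exp_le_exp.mpr ht2) (Real.exp_pos _).le ht.le
    rw [hdt] at h
    linarith
end

section
/- Let λ ≥ (1+√5)/2 be a real number. Then the maximum of the function φ(x) = λ·x·(1−x)/(1+λ·x) over the interval [1/(1+λ), 1] equals 1 − (2/λ)(√(1+λ) − 1), and it is attained at x = (√(1+λ) − 1)/λ. -/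
/-- For `λ ≥ (1+√5)/2`, the maximum of `φ x = λ x (1−x) / (1 + λ x)` over
`[1/(1+λ), 1]` equals `1 − (2/λ)(√(1+λ) − 1)` and is attained at
`x = (√(1+λ) − 1)/λ`. -/
theorem stmt8 (l : ℝ) (hl : (1 + Real.sqrt 5) / 2 ≤ l) :
    (Real.sqrt (1 + l) - 1) / l ∈ Set.Icc (1 / (1 + l)) (1 : ℝ) ∧
    IsMaxOn (fun x : ℝ => l * x * (1 - x) / (1 + l * x))
      (Set.Icc (1 / (1 + l)) 1) ((Real.sqrt (1 + l) - 1) / l) ∧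
    l * ((Real.sqrt (1 + l) - 1) / l) * (1 - (Real.sqrt (1 + l) - 1) / l) /
        (1 + l * ((Real.sqrt (1 + l) - 1) / l))
      = 1 - (2 / l) * (Real.sqrt (1 + l) - 1) := by
  have h5 : Real.sqrt 5 ^ 2 = 5 := Real.sq_sqrt (by norm_num)
  have h5n : (0:ℝ) ≤ Real.sqrt 5 := Real.sqrt_nonneg 5
  have hl1 : 1 < l := by nlinarith
  have hl0 : 0 < l := by linarith
  set s := Real.sqrt (1 + l) with hs
  have hs0 : 0 ≤ s := Real.sqrt_nonneg _
  have hs2 : s ^ 2 = 1 + l := Real.sq_sqrt (by linarith)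
  have hs1 : 1 < s := by nlinarith
  have hsl : s ≤ l := by nlinarith
  have hxeq : (s - 1) / l = 1 / (s + 1) := by
    rw [div_eq_div_iff (ne_of_gt hl0) (by positivity)]
    nlinarith
  have hfeq : l * ((s - 1) / l) * (1 - (s - 1) / l) / (1 + l * ((s - 1) / l))
      = (s - 1) / (s + 1) := by
    have hln : l ≠ 0 := ne_of_gt hl0
    have h1 : l * ((s - 1) / l) = s - 1 := by field_simp
    rw [h1, hxeq]
    have h2 : (1 : ℝ) + (s - 1) = s := by ring
    rw [h2]
    have hsn : s ≠ 0 := by linarith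
    have hsp : s + 1 ≠ 0 := by linarith
    field_simp
    ring
  have hmem : (s - 1) / l ∈ Set.Icc (1 / (1 + l)) (1:ℝ) := by
    rw [hxeq]
    constructor
    · apply one_div_le_one_div_of_le (by linarith) (by linarith)
    · rw [div_le_one (by linarith)]; linarith
  refine ⟨hmem, ?_, ?_⟩
  · intro x hx
    simp only [Set.mem_setOf_eq, hfeq]
    obtain ⟨hx1, hx2⟩ := hx
    have hx0 : 0 < x := lt_of_lt_of_le (by positivity) hx1
    have hd : 0 < 1 + l * x := by positivity
    rw [div_le_div_iff₀ hd (by linarith)]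
    nlinarith [sq_nonneg (l * x - s + 1), mul_pos hl0 hx0]
  · rw [hfeq]
    rw [div_eq_iff (by linarith : s + 1 ≠ 0)]
    field_simp
    nlinarith
end

section
/- Let λ be a real number with 0 < λ < (1+√5)/2. Then for every x in the interval [1/(1+λ), 1], the function φ(x) = λ·x·(1−x)/(1+λ·x) satisfies φ(x) ≤ λ²/((1+λ)(1+2λ)), with equality when x = 1/(1+λ). -/
/-- For `0 < λ < (1+√5)/2` and every `x ∈ [1/(1+λ), 1]`, the function
`φ x = λ x (1−x)/(1+λx)` satisfies `φ x ≤ λ²/((1+λ)(1+2λ))`, with equality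
at `x = 1/(1+λ)`. -/
theorem stmt9 (l : ℝ) (hl0 : 0 < l) (hl : l < (1 + Real.sqrt 5) / 2) :
    (∀ x ∈ Set.Icc (1 / (1 + l)) (1 : ℝ),
      l * x * (1 - x) / (1 + l * x) ≤ l ^ 2 / ((1 + l) * (1 + 2 * l))) ∧
    l * (1 / (1 + l)) * (1 - 1 / (1 + l)) / (1 + l * (1 / (1 + l)))
      = l ^ 2 / ((1 + l) * (1 + 2 * l)) := by
  have h5 : Real.sqrt 5 ^ 2 = 5 := Real.sq_sqrt (by norm_num)
  have h5n : (0:ℝ) ≤ Real.sqrt 5 := Real.sqrt_nonneg 5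
  have hs2 : (2:ℝ) ≤ Real.sqrt 5 := by
    nlinarith [h5, h5n, sq_nonneg (Real.sqrt 5 + 2)]
  have hgold : l ^ 2 < l + 1 := by
    nlinarith [mul_pos (show (0:ℝ) < Real.sqrt 5 - (2*l-1) by linarith) (show (0:ℝ) < Real.sqrt 5 + (2*l-1) by linarith)]
  have h1l : (0:ℝ) < 1 + l := by linarith
  have h2l : (0:ℝ) < 1 + 2 * l := by linarith
  constructor
  · rintro x ⟨hx1, hx2⟩
    have hxl : 1 ≤ (1 + l) * x := by
      rw [div_le_iff₀ h1l] at hx1; linarith [hx1]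
    have hx0 : 0 < x := by nlinarith
    have hden : 0 < 1 + l * x := by nlinarith
    rw [div_le_div_iff₀ hden (by positivity)]
    have key : 0 ≤ ((1 + l) * x - 1) * ((1 + 2 * l) * x - l) := by
      apply mul_nonneg (by linarith)
      nlinarith
    nlinarith [key]
  · field_simp
    ring
end

section
/- Let λ > 0 be real, let R be a positive even integer, and let a₀, a₁, …, a_R be real numbers in [1/(1+λ), 1] satisfying a_i ≥ 1/(1 + λ·a_{i+1}) for all 0 ≤ i < R. Define M(λ) = 1 − (2/λ)(√(1+λ) − 1) if λ ≥ (1+√5)/2 and M(λ) = λ²/((1+λ)(1+2λ)) if λ < (1+√5)/2. Then ∏_{i=0}^{R−1} (1 − a_i) ≤ M(λ)^{R/2}. -/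
/-!
Each factor `1 - a i` is at most `λ a_{i+1} / (1 + λ a_{i+1})` by the recursion, so a consecutive pair
contributes at most `f(b) = λ b (1 - b) / (1 + λ b)` with `b = a_{i+1} ∈ [1/(1+λ), 1]`. On `b ≥ 0`, `f`
peaks at `b = (√(1+λ) - 1)/λ` with value `(√(1+λ) - 1)²/λ`. For `λ` below the golden ratio this point lies
left of `1/(1+λ)`, so on the allowed interval the maximum is `f(1/(1+λ)) = λ²/((1+λ)(1+2λ))`.
-/

open Finset

/-- `M(λ)` of the statement. -/
noncomputable def hardcoreDecayRate (l : ℝ) : ℝ :=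
  if (1 + Real.sqrt 5) / 2 ≤ l then 1 - (2 / l) * (Real.sqrt (1 + l) - 1)
  else l ^ 2 / ((1 + l) * (1 + 2 * l))

lemma one_sub_two_div_mul_sqrt_sub_one {l : ℝ} (hl : 0 < l) :
    1 - (2 / l) * (Real.sqrt (1 + l) - 1) = (Real.sqrt (1 + l) - 1) ^ 2 / l := by
  have hs : Real.sqrt (1 + l) ^ 2 = 1 + l := Real.sq_sqrt (by linarith)
  field_simp
  linear_combination -hs

lemma pair_weight_le_sqrt {l b : ℝ} (hl : 0 < l) (hb : 0 ≤ b) :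
    l * b * (1 - b) / (1 + l * b) ≤ (Real.sqrt (1 + l) - 1) ^ 2 / l := by
  set s := Real.sqrt (1 + l)
  have hs : s ^ 2 = 1 + l := Real.sq_sqrt (by linarith)
  rw [div_le_div_iff₀ (by positivity) hl]
  have hdiff : (s - 1) ^ 2 * (1 + l * b) - l * b * (1 - b) * l = (s - 1 - l * b) ^ 2 := by
    linear_combination (l * b) * hs
  linarith [sq_nonneg (s - 1 - l * b)]

lemma sq_lt_add_one_of_lt_goldenRatio {l : ℝ} (hl₀ : 0 < l) (hl : l < (1 + Real.sqrt 5) / 2) :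
    l ^ 2 < l + 1 := by
  have h5 : Real.sqrt 5 ^ 2 = 5 := Real.sq_sqrt (by norm_num)
  have h1 : 1 < Real.sqrt 5 := by nlinarith [Real.sqrt_nonneg 5]
  nlinarith [mul_pos (show 0 < Real.sqrt 5 - (2 * l - 1) by linarith)
    (show 0 < Real.sqrt 5 + (2 * l - 1) by linarith)]

lemma pair_weight_le_of_sq_le {l b : ℝ} (hl : 0 < l) (hl2 : l ^ 2 ≤ l + 1)
    (hb : 1 / (1 + l) ≤ b) :
    l * b * (1 - b) / (1 + l * b) ≤ l ^ 2 / ((1 + l) * (1 + 2 * l)) := by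
  have hb' : 1 ≤ (1 + l) * b := by rwa [div_le_iff₀' (by linarith)] at hb
  have hb0 : 0 ≤ b := by nlinarith
  have h₁ : 0 ≤ (1 + l) * b - 1 := by linarith
  have h₂ : 0 ≤ (1 + 2 * l) * b - l := by nlinarith
  rw [div_le_div_iff₀ (by positivity) (by positivity)]
  -- the difference of the two sides is `λ ((1+λ) b - 1) ((1+2λ) b - λ)`
  nlinarith [mul_nonneg (mul_nonneg hl.le h₁) h₂]

lemma pair_weight_le_hardcoreDecayRate {l b : ℝ} (hl : 0 < l) (hb : 1 / (1 + l) ≤ b) :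
    l * b * (1 - b) / (1 + l * b) ≤ hardcoreDecayRate l := by
  unfold hardcoreDecayRate
  split_ifs with h
  · rw [one_sub_two_div_mul_sqrt_sub_one hl]
    exact pair_weight_le_sqrt hl (le_trans (by positivity) hb)
  · exact pair_weight_le_of_sq_le hl (sq_lt_add_one_of_lt_goldenRatio hl (not_le.mp h)).le hb

lemma one_sub_mul_one_sub_le_pair_weight {l a b : ℝ} (hl : 0 < l) (hb₀ : 0 ≤ b) (hb₁ : b ≤ 1)
    (hab : 1 / (1 + l * b) ≤ a) :
    (1 - a) * (1 - b) ≤ l * b * (1 - b) / (1 + l * b) := by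
  have hden : 0 < 1 + l * b := by positivity
  have ha : 1 - a ≤ l * b / (1 + l * b) := by
    have : 1 - 1 / (1 + l * b) = l * b / (1 + l * b) := by field_simp; ring
    linarith
  calc (1 - a) * (1 - b) ≤ l * b / (1 + l * b) * (1 - b) :=
        mul_le_mul_of_nonneg_right ha (by linarith)
    _ = l * b * (1 - b) / (1 + l * b) := by ring

lemma prod_range_two_mul {M : Type*} [CommMonoid M] (f : ℕ → M) (m : ℕ) :
    ∏ i ∈ range (2 * m), f i = ∏ i ∈ range m, f (2 * i) * f (2 * i + 1) := by
  induction m with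
  | zero => simp
  | succ m ih =>
    rw [show 2 * (m + 1) = 2 * m + 1 + 1 by ring, prod_range_succ, prod_range_succ, ih,
      prod_range_succ, mul_assoc]

theorem stmt10_general (l : ℝ) (hl : 0 < l) (R : ℕ) (hRe : Even R)
    (a : ℕ → ℝ) (ha : ∀ i ≤ R, a i ∈ Set.Icc (1 / (1 + l)) (1 : ℝ))
    (hrec : ∀ i < R, a i ≥ 1 / (1 + l * a (i + 1))) :
    ∏ i ∈ Finset.range R, (1 - a i) ≤
      (if (1 + Real.sqrt 5) / 2 ≤ l then 1 - (2 / l) * (Real.sqrt (1 + l) - 1)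
       else l ^ 2 / ((1 + l) * (1 + 2 * l))) ^ (R / 2) := by
  obtain ⟨m, rfl⟩ := even_iff_two_dvd.mp hRe
  rw [Nat.mul_div_cancel_left m two_pos, prod_range_two_mul]
  have hpos : ∀ i ≤ 2 * m, 0 ≤ 1 - a i := fun i hi => sub_nonneg.mpr (ha i hi).2
  calc ∏ i ∈ range m, (1 - a (2 * i)) * (1 - a (2 * i + 1))
      ≤ ∏ _i ∈ range m, hardcoreDecayRate l := by
        refine prod_le_prod (fun i hi => ?_) (fun i hi => ?_) <;> rw [mem_range] at hi
        · exact mul_nonneg (hpos _ (by omega)) (hpos _ (by omega))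
        · obtain ⟨hb₀, hb₁⟩ := ha (2 * i + 1) (by omega)
          exact (one_sub_mul_one_sub_le_pair_weight hl (le_trans (by positivity) hb₀) hb₁
            (hrec _ (by omega))).trans (pair_weight_le_hardcoreDecayRate hl hb₀)
    _ = hardcoreDecayRate l ^ m := by rw [prod_const, card_range]

/-- Let `λ > 0`, `R` a positive even integer, and `a₀, …, a_R ∈ [1/(1+λ), 1]`
with `a i ≥ 1/(1 + λ a (i+1))` for all `i < R`.  With
`M(λ) = 1 − (2/λ)(√(1+λ) − 1)` if `λ ≥ (1+√5)/2` and
`M(λ) = λ²/((1+λ)(1+2λ))` otherwise, we have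
`∏_{i<R} (1 − a i) ≤ M(λ)^(R/2)`. -/
theorem stmt10 (l : ℝ) (hl : 0 < l) (R : ℕ) (hR : 0 < R) (hRe : Even R)
    (a : ℕ → ℝ) (ha : ∀ i ≤ R, a i ∈ Set.Icc (1 / (1 + l)) (1 : ℝ))
    (hrec : ∀ i < R, a i ≥ 1 / (1 + l * a (i + 1))) :
    ∏ i ∈ Finset.range R, (1 - a i) ≤
      (if (1 + Real.sqrt 5) / 2 ≤ l then 1 - (2 / l) * (Real.sqrt (1 + l) - 1)
       else l ^ 2 / ((1 + l) * (1 + 2 * l))) ^ (R / 2) :=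
  stmt10_general l hl R hRe a ha hrec
end

section
/- Fix a real constant c > e. For real d > 0 and q ∈ [0,1], set λ = c/d and define φ_q(z) = 1 − λ·e^{−d(1−z)} + q·λ². Then there exist constants d* > 0 and real numbers b₁, b₂ with 0 < b₁ < b₂ such that for all d > d* and all q ∈ [0,1]: for every real z with z > 1 − b₁/d one has φ_q(z) < 1 − b₂/d, and for every real z with z < 1 − b₂/d one has φ_q(z) > 1 − b₁/d. -/
/-- Fix `c > e`.  With `λ = c/d` and `φ_q z = 1 − λ e^{−d(1−z)} + q λ²`, there
exist `d* > 0` and `0 < b₁ < b₂` such that for all `d > d*` and `q ∈ [0,1]`: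
every `z > 1 − b₁/d` has `φ_q z < 1 − b₂/d`, and every `z < 1 − b₂/d` has
`φ_q z > 1 − b₁/d`. -/
theorem stmt16 (c : ℝ) (hc : Real.exp 1 < c) :
    ∃ dstar b₁ b₂ : ℝ, 0 < dstar ∧ 0 < b₁ ∧ b₁ < b₂ ∧
      ∀ d : ℝ, dstar < d → ∀ q ∈ Set.Icc (0 : ℝ) 1,
        (∀ z : ℝ, 1 - b₁ / d < z →
          1 - (c / d) * Real.exp (-d * (1 - z)) + q * (c / d) ^ 2 < 1 - b₂ / d) ∧
        (∀ z : ℝ, z < 1 - b₂ / d →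
          1 - (c / d) * Real.exp (-d * (1 - z)) + q * (c / d) ^ 2 > 1 - b₁ / d) := by
  have he : (0:ℝ) < Real.exp 1 := Real.exp_pos 1
  have hc0 : 0 < c := lt_trans he hc
  have hlogc : 1 < Real.log c := by
    have h := Real.log_lt_log he hc
    simpa [Real.log_exp] using h
  have hlog : Real.log c < c / Real.exp 1 := by
    have hne : c / Real.exp 1 ≠ 1 := by
      intro h
      have : c = Real.exp 1 := by field_simp at h; linarith
      linarith
    have h1 : Real.log (c / Real.exp 1) < c / Real.exp 1 - 1 :=
      Real.log_lt_sub_one_of_pos (by positivity) hne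
    rw [Real.log_div (ne_of_gt hc0) (ne_of_gt he), Real.log_exp] at h1
    linarith
  set b₂ : ℝ := (Real.log c + c / Real.exp 1) / 2 with hb₂def
  have hδ : 0 < c / Real.exp 1 - b₂ := by rw [hb₂def]; linarith
  have hb₂gt : Real.log c < b₂ := by rw [hb₂def]; linarith
  refine ⟨c ^ 2 / (c / Real.exp 1 - b₂), 1, b₂, by positivity, one_pos,
    by rw [hb₂def]; linarith, ?_⟩
  intro d hd q hq
  have hd0 : 0 < d := lt_trans (by positivity) hd
  have hkey : c ^ 2 / d < c / Real.exp 1 - b₂ := by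
    rw [div_lt_iff₀ hd0]
    have := (div_lt_iff₀ hδ).mp hd
    nlinarith
  constructor
  · intro z hz
    have h1 : d * (1 - z) < 1 := by
      have : 1 - z < 1 / d := by linarith
      calc d * (1 - z) < d * (1 / d) := by
            exact mul_lt_mul_of_pos_left this hd0
        _ = 1 := by field_simp
    have hE : Real.exp (-1) < Real.exp (-d * (1 - z)) := by
      apply Real.exp_lt_exp.mpr; linarith
    have hcE : (c / d) * Real.exp (-1) < (c / d) * Real.exp (-d * (1 - z)) :=
      mul_lt_mul_of_pos_left hE (by positivity)
    have hq1 : q * (c / d) ^ 2 ≤ c ^ 2 / d ^ 2 := by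
      have : (c / d) ^ 2 = c ^ 2 / d ^ 2 := by ring
      nlinarith [sq_nonneg (c / d), hq.2, hq.1]
    have hexp1 : Real.exp (-1) = (Real.exp 1)⁻¹ := by
      rw [← Real.exp_neg]
    have h2 : (c / d) * Real.exp (-1) = c / Real.exp 1 / d := by
      rw [hexp1]; ring
    -- c^2/d^2 < (c/e - b₂)/d
    have h3 : c ^ 2 / d ^ 2 < (c / Real.exp 1 - b₂) / d := by
      rw [div_lt_div_iff₀ (by positivity) hd0]
      have := (div_lt_iff₀ hd0).mp hkey
      nlinarith
    have h4 : (c / Real.exp 1 - b₂) / d = c / Real.exp 1 / d - b₂ / d := by ring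
    linarith [hcE, hq1, h3]
  · intro z hz
    have h1 : b₂ < d * (1 - z) := by
      have : b₂ / d < 1 - z := by linarith
      calc b₂ = d * (b₂ / d) := by field_simp
        _ < d * (1 - z) := mul_lt_mul_of_pos_left this hd0
    have hE : Real.exp (-d * (1 - z)) < Real.exp (-b₂) := by
      apply Real.exp_lt_exp.mpr; linarith
    have hcb : c * Real.exp (-b₂) < 1 := by
      have h5 : Real.exp (-b₂) < Real.exp (-Real.log c) := by
        apply Real.exp_lt_exp.mpr; linarith
      rw [Real.exp_neg (Real.log c), Real.exp_log hc0] at h5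
      calc c * Real.exp (-b₂) < c * c⁻¹ := mul_lt_mul_of_pos_left h5 hc0
        _ = 1 := by field_simp
    have hcE : (c / d) * Real.exp (-d * (1 - z)) < 1 / d := by
      calc (c / d) * Real.exp (-d * (1 - z)) ≤ (c / d) * Real.exp (-b₂) := by
            exact mul_le_mul_of_nonneg_left hE.le (by positivity)
        _ = (c * Real.exp (-b₂)) / d := by ring
        _ < 1 / d := by gcongr
      -- fallback
    have hq0 : 0 ≤ q * (c / d) ^ 2 := mul_nonneg hq.1 (sq_nonneg _)
    linarith
end

section
/- Let Δ₁, Δ₂ ≥ 2 be real numbers, let λ(Δ₁, Δ₂) = Δ₂^{Δ₁}·((Δ₁+1)/(Δ₁Δ₂ − 1))^{Δ₁+1}, and for Δ > 0 define f_Δ(a) = 1/(1 + λ·a^Δ) on (0,1]. Then for every real λ with 0 < λ < λ(Δ₁, Δ₂): (i) there is a unique a* ∈ (0,1] with f_{Δ₁}(f_{Δ₂}(a*)) = a*; and (ii) there is a constant c with 0 < c ≤ (1/2)·(1 + λ/λ(Δ₁,Δ₂)) < 1 such that for every a₀ ∈ (0,1] and every integer t ≥ 1, |(f_{Δ₁}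 ∘ f_{Δ₂})^t(a₀) − a*| ≤ c^{t−1}·ln(λ + 1). -/
/-!
In the coordinate `u = log a` the map `f_Δ` becomes `h_Δ u = -log (1 + λ e^{Δu})`, whose
derivative is `-Δ (1 - e^{h_Δ u})`. Hence the derivative of `h_{Δ₁} ∘ h_{Δ₂}` equals
`Δ₁ Δ₂ (1 - y) λ y^{Δ₁} / (1 + λ y^{Δ₁})` with `y = f_{Δ₂}(e^u)`. Weighted AM–GM bounds it by
`(λ/λ(Δ₁,Δ₂)) (1 + (1 - c)/(Δ₁Δ₂ - 1))^{Δ₁+1} ≤ (2c - 1) e^{1-c} ≤ c`, where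
`c = (1 + λ/λ(Δ₁,Δ₂))/2`, so the composite is a `c`-contraction of `ℝ`. Banach's theorem gives
the fixed point; since all values of `h_{Δ₁} ∘ h_{Δ₂}` lie in `[-log (1 + λ), 0]` and `exp` is
1-Lipschitz on `(-∞, 0]`, the error after `t` steps is at most `c^{t-1} log (1 + λ)`.
-/

open Real Function

noncomputable def uniquenessThreshold (Δ₁ Δ₂ : ℝ) : ℝ :=
  Δ₂ ^ Δ₁ * ((Δ₁ + 1) / (Δ₁ * Δ₂ - 1)) ^ (Δ₁ + 1)

theorem uniquenessThreshold_pos {p q : ℝ} (hq : 0 < q) (hpq : 1 < p * q) :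
    0 < uniquenessThreshold p q := by
  have : 0 < p * q - 1 := by linarith
  have : 0 < p := pos_of_mul_pos_left (by linarith) hq.le
  unfold uniquenessThreshold
  positivity

theorem rpow_mul_le_mean_rpow {p y s : ℝ} (hp : 0 < p) (hy : 0 ≤ y) (hs : 0 ≤ s) :
    y ^ p * s ≤ ((p * y + s) / (p + 1)) ^ (p + 1) := by
  have hp1 : 0 < p + 1 := by linarith
  have amgm := geom_mean_le_arith_mean2_weighted (div_pos hp hp1).le (one_div_pos.2 hp1).le
    hy hs (by field_simp)
  have hmean : p / (p + 1) * y + 1 / (p + 1) * s = (p * y + s) / (p + 1) := by ring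
  rw [hmean] at amgm
  calc y ^ p * s = (y ^ (p / (p + 1)) * s ^ (1 / (p + 1))) ^ (p + 1) := by
        rw [mul_rpow (by positivity) (by positivity), ← rpow_mul hy, ← rpow_mul hs,
          div_mul_cancel₀ _ hp1.ne', one_div_mul_cancel hp1.ne', rpow_one]
    _ ≤ ((p * y + s) / (p + 1)) ^ (p + 1) := by gcongr

theorem one_add_div_rpow_le_exp {r m δ : ℝ} (hr : 0 ≤ r) (hrm : r ≤ m) (hδ : 0 ≤ δ) :
    (1 + δ / m) ^ r ≤ exp δ := by
  rcases hr.eq_or_lt with rfl | hr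
  · simpa using hδ
  have hm : 0 < m := hr.trans_le hrm
  calc (1 + δ / m) ^ r ≤ exp (δ / m) ^ r := by
        gcongr
        linarith [add_one_le_exp (δ / m)]
    _ = exp (δ / m * r) := (exp_mul _ _).symm
    _ ≤ exp δ := by
        gcongr
        calc δ / m * r ≤ δ / m * m := by gcongr
          _ = δ := div_mul_cancel₀ δ hm.ne'

theorem two_mul_sub_one_mul_exp_one_sub_le {c : ℝ} (hc : 0 < c) :
    (2 * c - 1) * exp (1 - c) ≤ c := by
  have hinv : c * exp (1 - c) ≤ 1 := by
    calc c * exp (1 - c) ≤ exp (c - 1) * exp (1 - c) := by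
          gcongr; linarith [add_one_le_exp (c - 1)]
      _ = 1 := by rw [← exp_add]; simp
  nlinarith [exp_pos (1 - c), sq_nonneg (c - 1)]

/-- Sharp for `A = p q - 1`, at `y = (p q - 1) / (q (p + 1))`: this is where `λ(Δ₁,Δ₂)` comes
from. -/
theorem uniquenessThreshold_mul_rpow_mul_sub_le {p q y A : ℝ} (hp : 0 < p) (hq : 0 < q)
    (hpq : 1 < p * q) (hy : 0 ≤ y) (hA : 0 ≤ A) :
    uniquenessThreshold p q * (y ^ p * (A - p * q * y)) ≤ (A / (p * q - 1)) ^ (p + 1) := by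
  have hL := (uniquenessThreshold_pos hq hpq).le
  have hpq1 : 0 < p * q - 1 := by linarith
  rcases lt_or_ge A (p * q * y) with hneg | hS
  · calc uniquenessThreshold p q * (y ^ p * (A - p * q * y)) ≤ 0 :=
          mul_nonpos_of_nonneg_of_nonpos hL
            (mul_nonpos_of_nonneg_of_nonpos (by positivity) (by linarith))
      _ ≤ (A / (p * q - 1)) ^ (p + 1) := by positivity
  set r := (p + 1) / (p * q - 1) with hr
  have hr0 : 0 < r := by positivity
  -- AM–GM for `Y = q r y` and `S = r (A - p q y)`, for which `p Y + S = r A` is independent of `y`.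
  have key := rpow_mul_le_mean_rpow hp (by positivity : 0 ≤ q * r * y)
    (mul_nonneg hr0.le (sub_nonneg.2 hS))
  calc uniquenessThreshold p q * (y ^ p * (A - p * q * y))
      = (q * r * y) ^ p * (r * (A - p * q * y)) := by
        rw [uniquenessThreshold, mul_rpow (by positivity) hy, mul_rpow hq.le hr0.le,
          rpow_add_one hr0.ne']
        ring
    _ ≤ _ := key
    _ = (A / (p * q - 1)) ^ (p + 1) := by
        congr 1
        rw [hr]
        field_simp
        ring

theorem mul_one_sub_mul_le_of_le_uniquenessThreshold {p q l y : ℝ} (hp : 2 ≤ p) (hq : 2 ≤ q)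
    (hl : 0 ≤ l) (hlL : l ≤ uniquenessThreshold p q) (hy : 0 ≤ y) :
    p * (1 - 1 / (1 + l * y ^ p)) * (q * (1 - y)) ≤ 1 / 2 * (1 + l / uniquenessThreshold p q) := by
  set L := uniquenessThreshold p q
  set c := 1 / 2 * (1 + l / L) with hc
  have hpq : p + 1 ≤ p * q - 1 := by nlinarith
  have hpq1 : 0 < p * q - 1 := by linarith
  have hL : 0 < L := uniquenessThreshold_pos (by linarith) (by linarith)
  have hratio : l / L ≤ 1 := div_le_one_of_le₀ hlL hL.le
  have hc0 : 0 < c := by positivity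
  have hcl : l / L = 2 * c - 1 := by rw [hc]; ring
  have hbound : l * (y ^ p * (p * q - c - p * q * y)) ≤ c :=
    calc l * (y ^ p * (p * q - c - p * q * y))
        = l / L * (L * (y ^ p * (p * q - c - p * q * y))) := by field_simp
      _ ≤ l / L * ((p * q - c) / (p * q - 1)) ^ (p + 1) := by
          gcongr
          exact uniquenessThreshold_mul_rpow_mul_sub_le (by linarith) (by linarith) (by nlinarith)
            hy (by nlinarith)
      _ = (2 * c - 1) * (1 + (1 - c) / (p * q - 1)) ^ (p + 1) := by
          rw [hcl]
          congr 2
          field_simp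
          ring
      _ ≤ (2 * c - 1) * exp (1 - c) := by
          gcongr
          · linarith [div_nonneg hl hL.le]
          · exact one_add_div_rpow_le_exp (by linarith) hpq (by linarith)
      _ ≤ c := two_mul_sub_one_mul_exp_one_sub_le hc0
  have hw : 0 < 1 + l * y ^ p := by positivity
  rw [one_sub_div hw.ne', add_sub_cancel_left, mul_div_assoc', div_mul_eq_mul_div,
    div_le_iff₀ hw]
  nlinarith

noncomputable def logHardCoreMap (l Δ u : ℝ) : ℝ := -log (1 + l * exp (u * Δ))

section logHardCoreMap

variable {l Δ u : ℝ}

theorem one_le_one_add_mul_exp (hl : 0 ≤ l) (x : ℝ) : 1 ≤ 1 + l * exp x :=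
  le_add_of_nonneg_right (by positivity)

theorem exp_logHardCoreMap (hl : 0 ≤ l) :
    exp (logHardCoreMap l Δ u) = 1 / (1 + l * exp u ^ Δ) := by
  rw [logHardCoreMap, exp_neg, exp_log (by linarith [one_le_one_add_mul_exp hl (u * Δ)]),
    exp_mul, one_div]

theorem logHardCoreMap_nonpos (hl : 0 ≤ l) : logHardCoreMap l Δ u ≤ 0 :=
  neg_nonpos.2 (log_nonneg (one_le_one_add_mul_exp hl _))

theorem neg_log_one_add_le_logHardCoreMap (hl : 0 ≤ l) (hΔ : 0 ≤ Δ) (hu : u ≤ 0) :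
    -log (1 + l) ≤ logHardCoreMap l Δ u := by
  have : exp (u * Δ) ≤ 1 := exp_le_one_iff.2 (mul_nonpos_of_nonpos_of_nonneg hu hΔ)
  refine neg_le_neg (log_le_log (by linarith [one_le_one_add_mul_exp hl (u * Δ)]) ?_)
  nlinarith

theorem hasDerivAt_logHardCoreMap (hl : 0 ≤ l) :
    HasDerivAt (logHardCoreMap l Δ) (-(Δ * (1 - exp (logHardCoreMap l Δ u)))) u := by
  have hpos : 0 < 1 + l * exp (u * Δ) := by linarith [one_le_one_add_mul_exp hl (u * Δ)]
  refine ((((hasDerivAt_mul_const Δ).exp.const_mul l).const_add 1).log hpos.ne').neg.congr_deriv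
    ?_
  rw [logHardCoreMap, exp_neg, exp_log hpos]
  field_simp
  ring

end logHardCoreMap

theorem lipschitzWith_logHardCoreMap_comp {Δ₁ Δ₂ l : ℝ} (h₁ : 2 ≤ Δ₁) (h₂ : 2 ≤ Δ₂) (hl : 0 ≤ l)
    (hlL : l ≤ uniquenessThreshold Δ₁ Δ₂) :
    LipschitzWith (1 / 2 * (1 + l / uniquenessThreshold Δ₁ Δ₂)).toNNReal
      (logHardCoreMap l Δ₁ ∘ logHardCoreMap l Δ₂) := by
  set c := 1 / 2 * (1 + l / uniquenessThreshold Δ₁ Δ₂)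
  have hderiv : ∀ u, HasDerivAt (logHardCoreMap l Δ₁ ∘ logHardCoreMap l Δ₂)
      (Δ₁ * (1 - exp (logHardCoreMap l Δ₁ (logHardCoreMap l Δ₂ u))) *
        (Δ₂ * (1 - exp (logHardCoreMap l Δ₂ u)))) u := fun u => by
    simpa only [neg_mul_neg] using
      (hasDerivAt_logHardCoreMap hl).comp u (hasDerivAt_logHardCoreMap hl)
  have hbound : ∀ u, ‖Δ₁ * (1 - exp (logHardCoreMap l Δ₁ (logHardCoreMap l Δ₂ u))) *
      (Δ₂ * (1 - exp (logHardCoreMap l Δ₂ u)))‖ ≤ c := fun u => by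
    have hv := logHardCoreMap_nonpos (Δ := Δ₂) (u := u) hl
    have hw := logHardCoreMap_nonpos (Δ := Δ₁) (u := logHardCoreMap l Δ₂ u) hl
    have hfactor₁ : 0 ≤ Δ₁ * (1 - exp (logHardCoreMap l Δ₁ (logHardCoreMap l Δ₂ u))) :=
      mul_nonneg (by linarith) (sub_nonneg.2 (exp_le_one_iff.2 hw))
    have hfactor₂ : 0 ≤ Δ₂ * (1 - exp (logHardCoreMap l Δ₂ u)) :=
      mul_nonneg (by linarith) (sub_nonneg.2 (exp_le_one_iff.2 hv))
    rw [Real.norm_eq_abs, abs_of_nonneg (mul_nonneg hfactor₁ hfactor₂), exp_logHardCoreMap hl]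
    exact mul_one_sub_mul_le_of_le_uniquenessThreshold h₁ h₂ hl hlL (exp_pos _).le
  refine LipschitzWith.of_dist_le_mul fun x y => ?_
  have hL := uniquenessThreshold_pos (p := Δ₁) (q := Δ₂) (by linarith) (by nlinarith)
  have hc : 0 ≤ c := by positivity
  rw [Real.coe_toNNReal c hc, Real.dist_eq, Real.dist_eq]
  simpa only [Real.norm_eq_abs] using convex_univ.norm_image_sub_le_of_norm_hasDerivWithin_le
    (fun u _ => (hderiv u).hasDerivWithinAt) (fun u _ => hbound u) (Set.mem_univ y)
    (Set.mem_univ x)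

theorem abs_exp_sub_exp_le {x y : ℝ} (hx : x ≤ 0) (hy : y ≤ 0) : |exp x - exp y| ≤ |x - y| := by
  simpa only [Real.norm_eq_abs, one_mul] using
    (convex_Iic 0).norm_image_sub_le_of_norm_hasDerivWithin_le (C := 1)
      (fun u _ => (hasDerivAt_exp u).hasDerivWithinAt)
      (fun u hu => by rw [Real.norm_of_nonneg (exp_pos u).le]; exact exp_le_one_iff.2 hu) hy hx

theorem exists_fixedPoint_of_semiconj_exp {F G : ℝ → ℝ} {K : NNReal} {B : ℝ}
    (hG : ContractingWith K G) (hFG : Semiconj exp G F) (hrange : ∀ u, G u ∈ Set.Icc (-B) 0) :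
    ∃ a ∈ Set.Ioc (0 : ℝ) 1, F a = a ∧ (∀ b, 0 < b → F b = b → b = a) ∧
      ∀ a₀, 0 < a₀ → ∀ t : ℕ, 1 ≤ t → |F^[t] a₀ - a| ≤ K ^ (t - 1) * B := by
  set u := ContractingWith.fixedPoint G hG
  have hu : IsFixedPt G u := hG.fixedPoint_isFixedPt
  have hu0 : u ≤ 0 := hu.eq ▸ (hrange u).2
  refine ⟨exp u, ⟨exp_pos u, exp_le_one_iff.2 hu0⟩, by rw [← hFG u, hu.eq], ?_, ?_⟩
  · intro b hb hFb
    have hlog : G (log b) = log b := by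
      rw [← log_exp (G (log b)), hFG, exp_log hb, hFb]
    rw [← exp_log hb, hG.fixedPoint_unique hlog]
  · intro a₀ ha₀ t ht
    obtain ⟨n, rfl⟩ := Nat.exists_eq_add_of_le' ht
    have hv := hrange (log a₀)
    calc |F^[n + 1] a₀ - exp u| = |exp (G^[n] (G (log a₀))) - exp u| := by
          rw [← iterate_succ_apply, (hFG.iterate_right (n + 1)) (log a₀), exp_log ha₀]
      _ ≤ |G^[n] (G (log a₀)) - u| := by
          refine abs_exp_sub_exp_le ?_ hu0
          rw [← iterate_succ_apply, iterate_succ_apply']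
          exact (hrange _).2
      _ ≤ K ^ n * |G (log a₀) - u| := by
          simpa only [Real.dist_eq, (hu.iterate n).eq, NNReal.coe_pow] using
            (hG.2.iterate n).dist_le_mul (G (log a₀)) u
      _ ≤ K ^ (n + 1 - 1) * B := by
          rw [Nat.add_sub_cancel]
          gcongr
          rw [abs_le]
          constructor <;> linarith [(hrange u).1, hv.1, hv.2, hu.eq]

/-- Let `Δ₁, Δ₂ ≥ 2`, `λ(Δ₁,Δ₂) = Δ₂^Δ₁ ((Δ₁+1)/(Δ₁Δ₂ − 1))^(Δ₁+1)`, and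
`f_Δ a = 1/(1 + λ a^Δ)`.  For every `0 < λ < λ(Δ₁,Δ₂)` the composition
`f_{Δ₁} ∘ f_{Δ₂}` has a unique fixed point `a* ∈ (0,1]`, and there is a
constant `0 < c ≤ (1/2)(1 + λ/λ(Δ₁,Δ₂)) < 1` with
`|(f_{Δ₁} ∘ f_{Δ₂})^[t] a₀ − a*| ≤ c^(t−1) ln(λ+1)` for all `a₀ ∈ (0,1]`
and integers `t ≥ 1`. -/
theorem stmt17 (Δ₁ Δ₂ : ℝ) (h1 : 2 ≤ Δ₁) (h2 : 2 ≤ Δ₂) (l : ℝ) (hl0 : 0 < l)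
    (hl : l < Δ₂ ^ Δ₁ * ((Δ₁ + 1) / (Δ₁ * Δ₂ - 1)) ^ (Δ₁ + 1)) :
    ∃ astar ∈ Set.Ioc (0 : ℝ) 1,
      1 / (1 + l * (1 / (1 + l * astar ^ Δ₂)) ^ Δ₁) = astar ∧
      (∀ a ∈ Set.Ioc (0 : ℝ) 1,
        1 / (1 + l * (1 / (1 + l * a ^ Δ₂)) ^ Δ₁) = a → a = astar) ∧
      ∃ c : ℝ, 0 < c ∧
        c ≤ (1 / 2) * (1 + l / (Δ₂ ^ Δ₁ * ((Δ₁ + 1) / (Δ₁ * Δ₂ - 1)) ^ (Δ₁ + 1))) ∧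
        (1 / 2) * (1 + l / (Δ₂ ^ Δ₁ * ((Δ₁ + 1) / (Δ₁ * Δ₂ - 1)) ^ (Δ₁ + 1))) < 1 ∧
        ∀ a₀ ∈ Set.Ioc (0 : ℝ) 1, ∀ t : ℕ, 1 ≤ t →
          |(fun a : ℝ => 1 / (1 + l * (1 / (1 + l * a ^ Δ₂)) ^ Δ₁))^[t] a₀ - astar|
            ≤ c ^ (t - 1) * Real.log (l + 1) := by
  change l < uniquenessThreshold Δ₁ Δ₂ at hl
  change ∃ astar ∈ _, _ ∧ _ ∧ ∃ c : ℝ, 0 < c ∧ c ≤ 1 / 2 * (1 + l / uniquenessThreshold Δ₁ Δ₂) ∧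
    1 / 2 * (1 + l / uniquenessThreshold Δ₁ Δ₂) < 1 ∧ _
  set c := 1 / 2 * (1 + l / uniquenessThreshold Δ₁ Δ₂) with hc
  have hL := uniquenessThreshold_pos (p := Δ₁) (q := Δ₂) (by linarith) (by nlinarith)
  have hc0 : 0 < c := by positivity
  have hc1 : c < 1 := by
    rw [hc]
    linarith [(div_lt_one hL).2 hl]
  have hG : ContractingWith c.toNNReal (logHardCoreMap l Δ₁ ∘ logHardCoreMap l Δ₂) := by
    exact ⟨by simpa using hc1, lipschitzWith_logHardCoreMap_comp h1 h2 hl0.le hl.le⟩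
  have hFG : Semiconj exp (logHardCoreMap l Δ₁ ∘ logHardCoreMap l Δ₂)
      (fun a : ℝ => 1 / (1 + l * (1 / (1 + l * a ^ Δ₂)) ^ Δ₁)) := fun u => by
    simp only [comp_apply, exp_logHardCoreMap hl0.le]
  have hrange (u : ℝ) : logHardCoreMap l Δ₁ (logHardCoreMap l Δ₂ u) ∈ Set.Icc (-log (l + 1)) 0 :=
    ⟨add_comm l 1 ▸ neg_log_one_add_le_logHardCoreMap hl0.le (by linarith)
      (logHardCoreMap_nonpos hl0.le), logHardCoreMap_nonpos hl0.le⟩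
  obtain ⟨a, ha, hFa, huniq, hconv⟩ := exists_fixedPoint_of_semiconj_exp hG hFG hrange
  refine ⟨a, ha, hFa, fun b hb => huniq b hb.1, c, hc0, le_rfl, hc1, fun a₀ ha₀ => ?_⟩
  simpa only [Real.coe_toNNReal c hc0.le] using hconv a₀ ha₀.1
end

section
/- Let γ ∈ (0,1) be real and set ε = γ²/4. There exists d₀ = d₀(γ) > 0 such that for every real d > d₀, with λ = (1−γ)·e/d and f_Δ(a) = 1/(1 + λ·a^Δ) on (0,1], every a* ∈ (0,1] satisfying f_{(1−ε)d}(f_{(1+ε)d}(a*)) = a* satisfies a* ≥ 1 − 1/((1+ε)·d). -/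
/-!
Write the fixed point as `a = 1 / (1 + u)` and put `v = (1 + ε) d u`. If `a < 1 - 1/((1+ε)d)`
then `v > 1`. Since `log a ≥ -u`, the inner argument satisfies `a^((1+ε)d) ≥ exp (-v)`, and
expanding `log (1 + λ x) ≥ λ x - λ²` in the outer map gives
`log v ≤ log ((1+ε)(1-γ)e) - (1-ε)(1-γ) e^(1-v) + O(1/d)`.
Against `log v ≥ 1 - e^(1-v)` (for `v ≥ 1`) and `e^(1-v) ≤ 1` this forces
`(1-ε)(1-γ) - log ((1+ε)(1-γ)e) ≤ O(1/d)`, while the left side is at least `εγ = γ³/4`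
by `log (1+ε) ≤ ε` and `log (1-γ) ≤ -γ - γ²/2`.
-/

open Real Set

noncomputable def hardCoreMap (lam Δ a : ℝ) : ℝ := 1 / (1 + lam * a ^ Δ)

namespace Real

lemma log_one_sub_le_neg_sub_sq_div_two {x : ℝ} (h0 : 0 ≤ x) (h1 : x < 1) :
    log (1 - x) ≤ -x - x ^ 2 / 2 := by
  have hsum := hasSum_pow_div_log_of_abs_lt_one (abs_lt.2 ⟨by linarith, h1⟩)
  have h := sum_le_hasSum (Finset.range 2) (fun n _ => by positivity) hsum
  norm_num [Finset.sum_range_succ] at h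
  linarith

lemma sub_sq_le_log_one_add {y : ℝ} (hy : 0 ≤ y) : y - y ^ 2 ≤ log (1 + y) := by
  have hinv : (1 + y)⁻¹ ≤ 1 - y + y ^ 2 := by
    rw [inv_le_iff_one_le_mul₀ (by positivity)]
    nlinarith [pow_nonneg hy 3]
  linarith [one_sub_inv_le_log_of_pos (by positivity : 0 < 1 + y)]

lemma one_sub_exp_one_sub_le_log {v : ℝ} (hv : 1 ≤ v) : 1 - exp (1 - v) ≤ log v := by
  have hderiv : ∀ t, 0 < t →
      HasDerivAt (fun t => log t + exp (1 - t)) (t⁻¹ - exp (1 - t)) t := fun t ht => by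
    have h := (hasDerivAt_log ht.ne').fun_add ((hasDerivAt_id t).const_sub 1).exp
    simpa [sub_eq_add_neg] using h
  have hmono : MonotoneOn (fun t => log t + exp (1 - t)) (Ici 1) := by
    refine monotoneOn_of_hasDerivWithinAt_nonneg (convex_Ici 1)
      (fun t ht => (hderiv t (by linarith [mem_Ici.1 ht])).continuousAt.continuousWithinAt)
      (fun t ht => (hderiv t ?_).hasDerivWithinAt) (fun t ht => ?_)
    · rw [interior_Ici] at ht; linarith [mem_Ioi.1 ht]
    rw [interior_Ici] at ht
    have ht0 : 0 < t := by linarith [mem_Ioi.1 ht]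
    have : exp (1 - t) ≤ t⁻¹ := by
      rw [show 1 - t = -(t - 1) by ring, exp_neg]
      exact inv_anti₀ ht0 (by linarith [add_one_le_exp (t - 1)])
    linarith
  have h := hmono self_mem_Ici hv hv
  simp only [sub_self, exp_zero, log_one] at h
  linarith

end Real

lemma hardCoreMap_pos {lam a : ℝ} (Δ : ℝ) (hlam : 0 ≤ lam) (ha : 0 ≤ a) :
    0 < hardCoreMap lam Δ a := by
  unfold hardCoreMap
  positivity

lemma exp_neg_mul_le_one_div_one_add_rpow {u Δ : ℝ} (hu : 0 ≤ u) (hΔ : 0 ≤ Δ) :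
    exp (-(Δ * u)) ≤ (1 / (1 + u)) ^ Δ := by
  rw [rpow_def_of_pos (by positivity), exp_le_exp, one_div, log_inv]
  nlinarith [mul_le_mul_of_nonneg_left (log_le_sub_one_of_pos (by positivity : 0 < 1 + u)) hΔ]

lemma log_mul_hardCoreMap_rpow_le {lam Δ₁ Δ₂ u : ℝ} (hlam : 0 < lam) (hΔ₁ : 0 ≤ Δ₁)
    (hΔ₂ : 0 ≤ Δ₂) (hu : 0 ≤ u) :
    log (lam * hardCoreMap lam Δ₁ (1 / (1 + u)) ^ Δ₂)
      ≤ log lam - Δ₂ * (lam * exp (-(Δ₁ * u)) - lam ^ 2) := by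
  have hP := exp_neg_mul_le_one_div_one_add_rpow hu hΔ₁
  set P := (1 / (1 + u)) ^ Δ₁
  set E := exp (-(Δ₁ * u))
  have hP0 : 0 ≤ P := rpow_nonneg (by positivity) _
  have hE0 : 0 ≤ E := (exp_pos _).le
  have hE1 : E ≤ 1 := exp_le_one_iff.2 (by nlinarith)
  have hlog : lam * E - lam ^ 2 ≤ log (1 + lam * P) := calc
    lam * E - lam ^ 2 ≤ lam * E - (lam * E) ^ 2 := by
      nlinarith [mul_le_mul_of_nonneg_left (pow_le_one₀ hE0 hE1 : E ^ 2 ≤ 1) (sq_nonneg lam)]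
    _ ≤ log (1 + lam * E) := sub_sq_le_log_one_add (by positivity)
    _ ≤ log (1 + lam * P) := log_le_log (by positivity) (by gcongr)
  rw [hardCoreMap, log_mul hlam.ne' (rpow_pos_of_pos (by positivity) _).ne',
    log_rpow (by positivity), one_div, log_inv]
  nlinarith [mul_le_mul_of_nonneg_left hlog hΔ₂]

theorem one_sub_one_div_le_of_isFixedPt_hardCoreMap {lam Δ₁ Δ₂ a : ℝ} (hlam : 0 < lam)
    (hΔ₁ : 0 < Δ₁) (hΔ₂ : 0 ≤ Δ₂) (hthr : Δ₂ * lam ≤ exp 1)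
    (hgap : Δ₂ * lam ^ 2 < Δ₂ * lam / exp 1 - log (Δ₁ * lam)) (ha : 0 < a)
    (hfix : Function.IsFixedPt (hardCoreMap lam Δ₂ ∘ hardCoreMap lam Δ₁) a) : 1 - 1 / Δ₁ ≤ a := by
  by_contra! hlt
  set u := lam * hardCoreMap lam Δ₁ a ^ Δ₂ with hu_def
  have hu : 0 < u := mul_pos hlam (rpow_pos_of_pos (hardCoreMap_pos Δ₁ hlam.le ha.le) _)
  have ha_eq : a = 1 / (1 + u) := hfix.symm
  have hv : 1 < Δ₁ * u := by
    have h1 : 1 - a ≤ u := by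
      have hau : a * (1 + u) = 1 := by rw [ha_eq]; field_simp
      nlinarith [mul_pos hu (mul_pos ha hu)]
    have h2 := lt_sub_comm.1 hlt
    rw [div_lt_iff₀ hΔ₁] at h2
    nlinarith
  have hlog_u := log_mul_hardCoreMap_rpow_le hlam hΔ₁.le hΔ₂ hu.le
  rw [← ha_eq, ← hu_def] at hlog_u
  have hlog_v := one_sub_exp_one_sub_le_log hv.le
  rw [log_mul hΔ₁.ne' hu.ne'] at hlog_v
  rw [log_mul hΔ₁.ne' hlam.ne'] at hgap
  have hX : exp (-(Δ₁ * u)) = exp (1 - Δ₁ * u) / exp 1 := by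
    rw [eq_div_iff (exp_pos 1).ne', ← exp_add]
    ring_nf
  set X := exp (1 - Δ₁ * u)
  have hX1 : X ≤ 1 := exp_le_one_iff.2 (by linarith)
  have hc : Δ₂ * lam / exp 1 ≤ 1 := (div_le_one (exp_pos 1)).2 hthr
  rw [hX] at hlog_u
  have hcX : Δ₂ * (lam * (X / exp 1)) = Δ₂ * lam / exp 1 * X := by ring
  -- `1 - X ≤ log (Δ₁ λ) + Δ₂ λ² - c X` with `c = Δ₂ λ / e ≤ 1`, and `(1 - c) X ≤ 1 - c`
  nlinarith [mul_le_mul_of_nonneg_left hX1 (sub_nonneg.2 hc)]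

lemma cube_div_four_le_sub_log {γ : ℝ} (hγ0 : 0 < γ) (hγ1 : γ < 1) :
    γ ^ 3 / 4 ≤ (1 - γ ^ 2 / 4) * (1 - γ) - log ((1 + γ ^ 2 / 4) * ((1 - γ) * exp 1)) := by
  have h1γ : 0 < 1 - γ := by linarith
  rw [log_mul (by positivity) (mul_pos h1γ (exp_pos 1)).ne', log_mul h1γ.ne' (exp_pos 1).ne',
    log_exp]
  have hε := log_le_sub_one_of_pos (by positivity : 0 < 1 + γ ^ 2 / 4)
  have hγ := log_one_sub_le_neg_sub_sq_div_two hγ0.le hγ1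
  nlinarith

/-- Let `γ ∈ (0,1)` and `ε = γ²/4`.  There is `d₀ > 0` such that for all
`d > d₀`, with `λ = (1−γ)e/d` and `f_Δ a = 1/(1 + λ a^Δ)`, every fixed point
`a* ∈ (0,1]` of `f_{(1−ε)d} ∘ f_{(1+ε)d}` satisfies `a* ≥ 1 − 1/((1+ε)d)`. -/
theorem stmt19 (γ : ℝ) (hγ : γ ∈ Set.Ioo (0 : ℝ) 1) :
    ∃ d₀ : ℝ, 0 < d₀ ∧ ∀ d : ℝ, d₀ < d →
      ∀ astar ∈ Set.Ioc (0 : ℝ) 1,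
        1 / (1 + ((1 - γ) * Real.exp 1 / d) *
            (1 / (1 + ((1 - γ) * Real.exp 1 / d) *
              astar ^ ((1 + γ ^ 2 / 4) * d))) ^ ((1 - γ ^ 2 / 4) * d)) = astar →
        astar ≥ 1 - 1 / ((1 + γ ^ 2 / 4) * d) := by
  obtain ⟨hγ0, hγ1⟩ := hγ
  refine ⟨4 * exp 1 ^ 2 / γ ^ 3, by positivity, fun d hd a ha hfix => ?_⟩
  have hd0 : 0 < d := lt_trans (by positivity) hd
  have h1γ : 0 < 1 - γ := by linarith
  have hε1 : γ ^ 2 / 4 < 1 := by nlinarith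
  have hc₁ : (1 - γ ^ 2 / 4) * (1 - γ) ≤ 1 := by nlinarith
  have hc₂ : (1 - γ ^ 2 / 4) * (1 - γ) ^ 2 ≤ 1 := by nlinarith
  have hlam₁ : (1 + γ ^ 2 / 4) * d * ((1 - γ) * exp 1 / d)
      = (1 + γ ^ 2 / 4) * ((1 - γ) * exp 1) := by field_simp
  have hlam₂ : (1 - γ ^ 2 / 4) * d * ((1 - γ) * exp 1 / d)
      = (1 - γ ^ 2 / 4) * (1 - γ) * exp 1 := by field_simp
  have hsmall : exp 1 ^ 2 / d < γ ^ 3 / 4 := by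
    rw [div_lt_iff₀ hd0]
    rw [div_lt_iff₀ (by positivity)] at hd
    linarith
  refine one_sub_one_div_le_of_isFixedPt_hardCoreMap (div_pos (mul_pos h1γ (exp_pos 1)) hd0)
    (by positivity) (by nlinarith) ?_ ?_ ha.1 hfix
  · rw [hlam₂]
    exact mul_le_of_le_one_left (exp_pos 1).le hc₁
  · have hsq : (1 - γ ^ 2 / 4) * d * ((1 - γ) * exp 1 / d) ^ 2
        = (1 - γ ^ 2 / 4) * (1 - γ) ^ 2 * (exp 1 ^ 2 / d) := by field_simp
    rw [hsq, hlam₁, hlam₂, mul_div_cancel_right₀ _ (exp_pos 1).ne']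
    have := mul_le_of_le_one_left (div_pos (pow_pos (exp_pos 1) 2) hd0).le hc₂
    linarith [cube_div_four_le_sub_log hγ0 hγ1]
end
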